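/- Let $K$ be a real symmetric $p\times p$ matrix and $\mu>0$. If $\Theta'$ is any real symmetric positive definite $p\times p$ matrix satisfying $-\Theta'^{-1}+\mu\Theta' = K$, then $\Theta' = \dfrac{K+\sqrt{K^2+4\mu I}}{2\mu}$; i.e., the equation $-\Theta^{-1}+\mu\Theta=K$ has a unique symmetric positive definite solution. -/

import Mathlib

/-!
If `Θ` is a positive definite solution, then `A = μΘ + Θ⁻¹` is positive definite and, since
`Θ` commutes with `Θ⁻¹`, `A² = (μΘ - Θ⁻¹)² + 4μI = K² + 4μI`. So `A` is the positive
semidefinite square root of `K² + 4μI`, which is unique, and `K + A = 2μΘ`.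
-/

open scoped ComplexOrder in
/-- The square root of a positive semidefinite matrix, as `Matrix.PosSemidef.sqrt` was defined
in Mathlib (December 2024); it has since been removed from Mathlib. -/
noncomputable def Matrix.PosSemidef.sqrt {n 𝕜 : Type*} [Fintype n] [RCLike 𝕜] [DecidableEq n]
    {A : Matrix n n 𝕜} (hA : A.PosSemidef) : Matrix n n 𝕜 :=
  hA.1.eigenvectorUnitary.1 * Matrix.diagonal ((↑) ∘ (√·) ∘ hA.1.eigenvalues) *
    (star hA.1.eigenvectorUnitary : Matrix n n 𝕜)

namespace Matrix

variable {n : Type*} [Fintype n] [DecidableEq n]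

open scoped MatrixOrder ComplexOrder in
theorem PosSemidef.sqrt_eq_cfcSqrt {𝕜 : Type*} [RCLike 𝕜] {B : Matrix n n 𝕜}
    (hB : B.PosSemidef) : hB.sqrt = CFC.sqrt B := by
  rw [CFC.sqrt_eq_cfc, cfc_nnreal_eq_real _ B, hB.1.cfc_eq]
  simp only [IsHermitian.cfc, PosSemidef.sqrt, Unitary.conjStarAlgAut_apply]
  congr 3
  funext i
  simp [hB.eigenvalues_nonneg i]

open scoped MatrixOrder ComplexOrder in
theorem PosSemidef.eq_sqrt_of_sq_eq {𝕜 : Type*} [RCLike 𝕜] {A B : Matrix n n 𝕜}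
    (hA : A.PosSemidef) (hB : B.PosSemidef) (h : A ^ 2 = B) : A = hB.sqrt := by
  rw [hB.sqrt_eq_cfcSqrt, ← h, CFC.sqrt_sq A hA.nonneg]

theorem add_inv_sq_of_sub_inv_eq {R : Type*} [CommRing R] {Θ K : Matrix n n R} {μ : R}
    (hΘ : IsUnit Θ.det) (h : -Θ⁻¹ + μ • Θ = K) :
    (μ • Θ + Θ⁻¹) ^ 2 = K ^ 2 + (4 * μ) • (1 : Matrix n n R) := by
  rw [← h]
  simp only [sq, add_mul, mul_add, neg_mul, mul_neg, smul_mul, Matrix.mul_smul,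
    mul_nonsing_inv _ hΘ, nonsing_inv_mul _ hΘ, smul_smul]
  module

theorem PosDef.smul_add_inv {Θ : Matrix n n ℝ} (hΘ : Θ.PosDef) {μ : ℝ} (hμ : 0 < μ) :
    (μ • Θ + Θ⁻¹).PosDef :=
  (hΘ.smul hμ).add hΘ.inv

end Matrix

theorem theta_update_unique_posDef_solution_general (p : ℕ) (K : Matrix (Fin p) (Fin p) ℝ)
    (μ : ℝ) (hμ : 0 < μ)
    (hP : (K ^ 2 + (4 * μ) • (1 : Matrix (Fin p) (Fin p) ℝ)).PosSemidef)
    (Θ' : Matrix (Fin p) (Fin p) ℝ) (hΘ' : Θ'.PosDef)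
    (heq : -Θ'⁻¹ + μ • Θ' = K) :
    Θ' = (2 * μ)⁻¹ • (K + hP.sqrt) := by
  have hsqrt : μ • Θ' + Θ'⁻¹ = hP.sqrt :=
    (hΘ'.smul_add_inv hμ).posSemidef.eq_sqrt_of_sq_eq hP
      (Matrix.add_inv_sq_of_sub_inv_eq ((Matrix.isUnit_iff_isUnit_det _).mp hΘ'.isUnit) heq)
  have hsum : K + (μ • Θ' + Θ'⁻¹) = (2 * μ) • Θ' := by
    rw [← heq]; module
  rw [← hsqrt, hsum, smul_smul, inv_mul_cancel₀ (by positivity), one_smul]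

/-- Uniqueness: any symmetric positive definite solution `Θ'` of the matrix
quadratic equation `-Θ'⁻¹ + μ Θ' = K` equals `(K + √(K ^ 2 + 4μ I)) / (2μ)`.
The hypothesis `hP` is automatically satisfied since `K` is symmetric and
`μ > 0`. -/
theorem theta_update_unique_posDef_solution (p : ℕ) (K : Matrix (Fin p) (Fin p) ℝ)
    (hK : K.IsHermitian) (μ : ℝ) (hμ : 0 < μ)
    (hP : (K ^ 2 + (4 * μ) • (1 : Matrix (Fin p) (Fin p) ℝ)).PosSemidef)
    (Θ' : Matrix (Fin p) (Fin p) ℝ) (hΘ' : Θ'.PosDef)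
    (heq : -Θ'⁻¹ + μ • Θ' = K) :
    Θ' = (2 * μ)⁻¹ • (K + hP.sqrt) :=
  theta_update_unique_posDef_solution_general p K μ hμ hP Θ' hΘ' heq
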